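/- arXiv:2405.04202 — 2 statements merged into one kernel-verified Lean document; each statement's English description precedes it below -/
import Mathlib

section
/- Let X be a Banach space over 𝔽, where 𝔽 = ℝ or ℂ. For a nonempty closed convex bounded set U ⊆ X define p_U(x*) = inf { Re x*(x) : x ∈ U } for x* ∈ X*, and for a weak* upper semicontinuous superlinear functional p : X* → ℝ define U_p = { x ∈ X : Re x*(x) ≥ p(x*) for every x* ∈ X* }. Then: (a) p_U is weak* upper semicontinuous and superlinear; (b) U_p is nonempty, closed, convex and bounded; (c) U_{p_U} = U for every nonempty closed convex bounded U ⊆ X; (d) p_{U_p} = p for every weak* upper semicontinuous superlinear p : X* → ℝ. -/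
/-!
`p_U` is an infimum of the weak* continuous functions `φ ↦ Re φ(x)`, hence weak* upper
semicontinuous, and it is superlinear. `U_p` is an intersection of closed real half-spaces; it is
bounded by the uniform boundedness principle, since `p φ ≤ Re φ(x) ≤ -p(-φ)` on it.
`U_{p_U} = U` is Hahn–Banach separation in `X`.

For `p_{U_p} = p`, the hypograph of `p` is a weak* closed convex cone in `X* × ℝ`. Separating
`(φ, s)` with `p φ < s` from it gives a weak* continuous functional, i.e. `(ψ, t) ↦ Re ψ(y) + t c`
for some `y ∈ X`, and `c < 0`; then `y / (-c)` lies in `U_p` and `Re φ(y / (-c)) < s`.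
-/

noncomputable section

variable (𝕜 X : Type*) [RCLike 𝕜] [NormedAddCommGroup X] [NormedSpace 𝕜 X]

/-- A set is (really) convex: convex combinations with real coefficients stay in the set. -/
def RealConvex (U : Set X) : Prop :=
  ∀ x ∈ U, ∀ y ∈ U, ∀ a b : ℝ, 0 ≤ a → 0 ≤ b → a + b = 1 →
    ((a : 𝕜) • x + (b : 𝕜) • y) ∈ U

/-- `p_U(x*) = inf { Re x*(x) : x ∈ U }`. -/
def pU (U : Set X) (φ : WeakDual 𝕜 X) : ℝ :=
  sInf ((fun x => RCLike.re (φ x)) '' U)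

/-- A real-valued functional on the dual is superlinear if it is positively homogeneous
(for real scalars) and superadditive. -/
def Superlinear (p : WeakDual 𝕜 X → ℝ) : Prop :=
  (∀ c : ℝ, 0 ≤ c → ∀ φ : WeakDual 𝕜 X, p ((c : 𝕜) • φ) = c * p φ) ∧
  (∀ φ ψ : WeakDual 𝕜 X, p φ + p ψ ≤ p (φ + ψ))

/-- `U_p = { x ∈ X : Re x*(x) ≥ p(x*) for every x* ∈ X* }`. -/
def Uset (p : WeakDual 𝕜 X → ℝ) : Set X :=
  {x : X | ∀ φ : WeakDual 𝕜 X, p φ ≤ RCLike.re (φ x)}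

open RCLike Set Bornology Pointwise

section

variable {𝕜 X}

instance : LocallyConvexSpace ℝ (WeakDual 𝕜 X) := WeakBilin.locallyConvexSpace

theorem RCLike.norm_le_abs_re_add_abs_im (z : 𝕜) : ‖z‖ ≤ |re z| + |im z| := by
  refine le_of_pow_le_pow_left₀ two_ne_zero (by positivity) ?_
  rw [norm_sq_eq_def]
  nlinarith [abs_mul_abs_self (re z), abs_mul_abs_self (im z), abs_nonneg (re z),
    abs_nonneg (im z)]

/-- Applied to `±φ` and `±iφ`, the hypothesis bounds every `φ` on `S`, and the uniform
boundedness principle applies. -/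
theorem isBounded_of_bddBelow_re_image [CompleteSpace X] {S : Set X}
    (hS : ∀ φ : StrongDual 𝕜 X, BddBelow ((fun x ↦ re (φ x)) '' S)) : IsBounded S := by
  have abs_re_le : ∀ φ : StrongDual 𝕜 X, ∃ C, ∀ x ∈ S, |re (φ x)| ≤ C := fun φ ↦ by
    obtain ⟨a, ha⟩ := hS φ
    obtain ⟨b, hb⟩ := hS (-φ)
    refine ⟨max (-a) (-b), fun x hx ↦ abs_le.2 ⟨?_, ?_⟩⟩
    · linarith [ha (mem_image_of_mem _ hx), le_max_left (-a) (-b)]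
    · have := hb (mem_image_of_mem _ hx)
      simp only [neg_apply, map_neg] at this
      linarith [le_max_right (-a) (-b)]
  have norm_le : ∀ φ : StrongDual 𝕜 X, ∃ C, ∀ x : S,
      ‖NormedSpace.inclusionInDoubleDual 𝕜 X x φ‖ ≤ C := fun φ ↦ by
    obtain ⟨C₁, hC₁⟩ := abs_re_le φ
    obtain ⟨C₂, hC₂⟩ := abs_re_le ((I : 𝕜) • φ)
    refine ⟨C₁ + C₂, fun ⟨x, hx⟩ ↦
      (norm_le_abs_re_add_abs_im (φ x)).trans (add_le_add (hC₁ x hx) ?_)⟩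
    simpa [I_mul_re] using hC₂ x hx
  obtain ⟨C, hC⟩ := banach_steinhaus norm_le
  refine isBounded_iff_forall_norm_le.2 ⟨C, fun x hx ↦ ?_⟩
  rw [← (NormedSpace.inclusionInDoubleDualLi 𝕜).norm_map x]
  exact hC ⟨x, hx⟩

theorem WeakDual.exists_re_apply_eq (g : StrongDual ℝ (WeakDual 𝕜 X)) :
    ∃ x : X, ∀ φ : WeakDual 𝕜 X, g φ = re (φ x) := by
  obtain ⟨x, hx⟩ := LinearMap.dualEmbedding_surjective (topDualPairing 𝕜 X)
    (StrongDual.extendRCLike (F := WeakBilin (topDualPairing 𝕜 X)) g)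
  exact ⟨x, fun φ ↦ (StrongDual.re_extendRCLike_apply (F := WeakBilin _) g φ).symm.trans
    (congrArg (fun f ↦ re (f φ)) hx.symm)⟩

theorem re_apply_ofReal_smul (φ : WeakDual 𝕜 X) (r : ℝ) (x : X) :
    re (φ ((r : 𝕜) • x)) = r * re (φ x) := by
  rw [map_smul, smul_eq_mul, re_ofReal_mul]

theorem RealConvex.convex [Module ℝ X] [IsScalarTower ℝ 𝕜 X] {U : Set X}
    (hU : RealConvex 𝕜 X U) : Convex ℝ U := fun x hx y hy a b ha hb hab ↦ by
  simpa only [algebraMap_smul] using hU x hx y hy a b ha hb hab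

namespace Superlinear

variable {p : WeakDual 𝕜 X → ℝ}

theorem map_zero (hp : Superlinear 𝕜 X p) : p 0 = 0 := by
  simpa using hp.1 0 le_rfl 0

theorem map_smul (hp : Superlinear 𝕜 X p) {c : ℝ} (hc : 0 ≤ c) (φ : WeakDual 𝕜 X) :
    p (c • φ) = c * p φ := by
  rw [← algebraMap_smul 𝕜 c φ]
  exact hp.1 c hc φ

def hypograph (hp : Superlinear 𝕜 X p) (hp_usc : UpperSemicontinuous p) :
    ProperCone ℝ (WeakDual 𝕜 X × ℝ) where
  carrier := {q | q.2 ≤ p q.1}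
  add_mem' ha hb := (add_le_add ha hb).trans (hp.2 _ _)
  zero_mem' := hp.map_zero.ge
  smul_mem' c q hq := by
    show c.1 * q.2 ≤ p (c.1 • q.1)
    rw [hp.map_smul c.2]
    exact mul_le_mul_of_nonneg_left hq c.2
  isClosed' := upperSemicontinuous_iff_IsClosed_hypograph.1 hp_usc

theorem mem_hypograph (hp : Superlinear 𝕜 X p) (hp_usc : UpperSemicontinuous p)
    {q : WeakDual 𝕜 X × ℝ} : q ∈ hp.hypograph hp_usc ↔ q.2 ≤ p q.1 :=
  Iff.rfl

end Superlinear

section pU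

variable {U : Set X}

theorem bddBelow_re_image (hU : IsBounded U) (φ : WeakDual 𝕜 X) :
    BddBelow ((fun x ↦ re (φ x)) '' U) := by
  simpa [Function.comp_def] using
    ((reCLM.lipschitz.comp (WeakDual.toStrongDual φ).lipschitz).isBounded_image hU).bddBelow

theorem pU_le (hU : IsBounded U) {x : X} (hx : x ∈ U) (φ : WeakDual 𝕜 X) :
    pU 𝕜 X U φ ≤ re (φ x) :=
  csInf_le (bddBelow_re_image hU φ) (mem_image_of_mem _ hx)

theorem le_pU (hU : U.Nonempty) {φ : WeakDual 𝕜 X} {c : ℝ} (h : ∀ x ∈ U, c ≤ re (φ x)) :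
    c ≤ pU 𝕜 X U φ :=
  le_csInf (hU.image _) (forall_mem_image.2 h)

theorem upperSemicontinuous_pU (hU : IsBounded U) : UpperSemicontinuous (pU 𝕜 X U) := by
  have : pU 𝕜 X U = fun φ ↦ ⨅ x : U, re (φ x) := funext fun φ ↦ sInf_image'
  rw [this]
  refine upperSemicontinuous_ciInf (fun φ ↦ ?_) fun x ↦
    (continuous_re.comp (WeakDual.eval_continuous x.1)).upperSemicontinuous
  have := bddBelow_re_image hU φ
  rwa [image_eq_range] at this

theorem superlinear_pU (hne : U.Nonempty) (hU : IsBounded U) : Superlinear 𝕜 X (pU 𝕜 X U) := by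
  refine ⟨fun c hc φ ↦ ?_, fun φ ψ ↦ le_pU hne fun x hx ↦ ?_⟩
  · have : (fun x ↦ re (((c : 𝕜) • φ) x)) '' U = c • ((fun x ↦ re (φ x)) '' U) := by
      rw [← image_smul, image_image]
      exact image_congr fun x _ ↦ re_ofReal_mul c (φ x)
    rw [pU, this, Real.sInf_smul_of_nonneg hc, smul_eq_mul, pU]
  · show _ ≤ re (φ x + ψ x)
    rw [map_add]
    exact add_le_add (pU_le hU hx φ) (pU_le hU hx ψ)

end pU

section Uset

variable (p : WeakDual 𝕜 X → ℝ)

theorem isClosed_Uset : IsClosed (Uset 𝕜 X p) := by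
  simp only [Uset, ofPred_forall]
  exact isClosed_iInter fun φ ↦ isClosed_le continuous_const (continuous_re.comp φ.continuous)

theorem realConvex_Uset : RealConvex 𝕜 X (Uset 𝕜 X p) := by
  intro x hx y hy a b ha hb hab φ
  rw [map_add, map_add, re_apply_ofReal_smul, re_apply_ofReal_smul]
  calc p φ = a * p φ + b * p φ := by rw [← add_mul, hab, one_mul]
    _ ≤ a * re (φ x) + b * re (φ y) := by gcongr <;> [exact hx φ; exact hy φ]

theorem isBounded_Uset [CompleteSpace X] : IsBounded (Uset 𝕜 X p) :=
  isBounded_of_bddBelow_re_image fun φ ↦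
    ⟨p (StrongDual.toWeakDual φ), forall_mem_image.2 fun _ hx ↦ hx _⟩

variable {p}

theorem exists_mem_Uset_re_lt (hp : Superlinear 𝕜 X p) (hp_usc : UpperSemicontinuous p)
    {φ₀ : WeakDual 𝕜 X} {s : ℝ} (hs : p φ₀ < s) : ∃ x ∈ Uset 𝕜 X p, re (φ₀ x) < s := by
  obtain ⟨f, hf_nonneg, hf_neg⟩ := (hp.hypograph hp_usc).hyperplane_separation_point
    (x₀ := (φ₀, s)) (by simpa [hp.mem_hypograph] using hs)
  obtain ⟨y, hy⟩ := WeakDual.exists_re_apply_eq (f.comp (.inl ℝ _ ℝ))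
  have hf : ∀ φ t, f (φ, t) = re (φ y) + t * f (0, 1) := fun φ t ↦ by
    rw [← f.comp_inl_add_comp_inr, ← hy, ← smul_eq_mul, ← map_smul]
    simp
  set c := f (0, 1)
  have hmem : ∀ φ, 0 ≤ re (φ y) + p φ * c := fun φ ↦
    hf φ (p φ) ▸ hf_nonneg _ ((hp.mem_hypograph hp_usc).2 le_rfl)
  have hφ₀ : re (φ₀ y) + s * c < 0 := hf φ₀ s ▸ hf_neg
  have hc : 0 < -c := by nlinarith [hmem φ₀]
  refine ⟨(((-c)⁻¹ : ℝ) : 𝕜) • y, fun φ ↦ ?_, ?_⟩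
  · rw [re_apply_ofReal_smul, le_inv_mul_iff₀ hc]
    linarith [hmem φ]
  · rw [re_apply_ofReal_smul, inv_mul_lt_iff₀ hc]
    linarith

theorem Uset_nonempty (hp : Superlinear 𝕜 X p) (hp_usc : UpperSemicontinuous p) :
    (Uset 𝕜 X p).Nonempty :=
  let ⟨x, hx, _⟩ := exists_mem_Uset_re_lt hp hp_usc (φ₀ := 0) (hp.map_zero.trans_lt one_pos)
  ⟨x, hx⟩

end Uset

theorem Uset_pU {U : Set X} (hne : U.Nonempty) (hcl : IsClosed U) (hconv : RealConvex 𝕜 X U)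
    (hU : IsBounded U) : Uset 𝕜 X (pU 𝕜 X U) = U := by
  refine Subset.antisymm (fun x hx ↦ ?_) fun x hx φ ↦ pU_le hU hx φ
  let _ := NormedSpace.restrictScalars ℝ 𝕜 X
  have : IsScalarTower ℝ 𝕜 X := .of_algebraMap_smul fun _ _ ↦ rfl
  by_contra hxU
  obtain ⟨f, u, hfU, hfx⟩ := geometric_hahn_banach_closed_point (𝕜 := 𝕜) hconv.convex hcl hxU
  have hre : ∀ a, re (StrongDual.toWeakDual (-f) a) = -re (f a) := fun a ↦ map_neg re (f a)
  have hle : -u ≤ pU 𝕜 X U (StrongDual.toWeakDual (-f)) :=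
    le_pU hne fun a ha ↦ by linarith [hre a, hfU a ha]
  linarith [hx (StrongDual.toWeakDual (-f)), hre x]

theorem pU_Uset {p : WeakDual 𝕜 X → ℝ} (hp : Superlinear 𝕜 X p)
    (hp_usc : UpperSemicontinuous p) : pU 𝕜 X (Uset 𝕜 X p) = p := by
  funext φ
  refine le_antisymm (le_of_forall_gt fun s hs ↦ ?_) ?_
  · obtain ⟨x, hx, hxs⟩ := exists_mem_Uset_re_lt hp hp_usc hs
    have hbdd : BddBelow ((fun x ↦ re (φ x)) '' Uset 𝕜 X p) :=
      ⟨p φ, by rintro _ ⟨y, hy, rfl⟩; exact hy φ⟩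
    exact (csInf_le hbdd (mem_image_of_mem _ hx)).trans_lt hxs
  · exact le_csInf ((Uset_nonempty hp hp_usc).image _) (forall_mem_image.2 fun x hx ↦ hx φ)

end

/-- Batty's abstract correspondences: for a Banach space `X` over `𝕜 = ℝ, ℂ`:
(a) `p_U` is weak* upper semicontinuous and superlinear for each nonempty closed convex bounded
`U`; (b) `U_p` is nonempty closed convex bounded for each weak* upper semicontinuous superlinear
`p`; (c) `U_{p_U} = U`; (d) `p_{U_p} = p`. -/
theorem batty_abstract_correspondence [CompleteSpace X] :
    (∀ U : Set X, U.Nonempty → IsClosed U → RealConvex 𝕜 X U → Bornology.IsBounded U →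
      UpperSemicontinuous (pU 𝕜 X U) ∧ Superlinear 𝕜 X (pU 𝕜 X U)) ∧
    (∀ p : WeakDual 𝕜 X → ℝ, UpperSemicontinuous p → Superlinear 𝕜 X p →
      (Uset 𝕜 X p).Nonempty ∧ IsClosed (Uset 𝕜 X p) ∧ RealConvex 𝕜 X (Uset 𝕜 X p) ∧
        Bornology.IsBounded (Uset 𝕜 X p)) ∧
    (∀ U : Set X, U.Nonempty → IsClosed U → RealConvex 𝕜 X U → Bornology.IsBounded U →
      Uset 𝕜 X (pU 𝕜 X U) = U) ∧
    (∀ p : WeakDual 𝕜 X → ℝ, UpperSemicontinuous p → Superlinear 𝕜 X p →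
      pU 𝕜 X (Uset 𝕜 X p) = p) :=
  ⟨fun _ hne _ _ hU ↦ ⟨upperSemicontinuous_pU hU, superlinear_pU hne hU⟩,
    fun p hp_usc hp ↦ ⟨Uset_nonempty hp hp_usc, isClosed_Uset p, realConvex_Uset p,
      isBounded_Uset p⟩,
    fun _ hne hcl hconv hU ↦ Uset_pU hne hcl hconv hU,
    fun _ hp_usc hp ↦ pU_Uset hp hp_usc⟩
end
end

section
/- Let K and L be compact Hausdorff spaces with L metrizable, let ν be a finite signed Radon measure on K × L, and let σ be the pushforward of the total variation measure |ν| under the first projection. Suppose (ν_t)_{t∈K} and (ν'_t)_{t∈K} are two indexed families of signed Radon measures on L such that ‖ν_t‖ = ‖ν'_t‖ = 1 for all t ∈ K, and such that for every continuous f : K × L → ℝ the functions t ↦ ∫_L f(t,z) dν_t(z) and t ↦ ∫_L f(t,z) dν'_t(z) are σ-measurable and ∫_{K×L} f dν = ∫_K ( ∫_L f(t,z) dν_t(z) ) dσ(t) = ∫_K ( ∫_L f(t,z) dν'_t(z) ) dσ(t). Then ν_t = ν'_t for σ-almost every t ∈ K. -/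
/-!
Fix `g ∈ C(L)`. Testing the disintegration identity against `(t, z) ↦ a t * g z` with
`a ∈ C(K)` shows that the bounded function `t ↦ ν_t(g) - ν'_t(g)` integrates to zero against every
`a ∈ C(K)`. As the image of the regular measure `|ν|`, `σ` is regular, so `C(K)` is dense in
`L¹(σ)` and the function vanishes `σ`-a.e. Since `C(L)` is separable and `g ↦ ν_t(g)` is
continuous, one null set serves for all `g`, and a signed measure on the metrizable space `L` is
determined by its integrals of continuous functions.
-/

open MeasureTheory
open scoped ENNReal

noncomputable section

/-- The integral of a real function against a finite signed measure, via the Jordan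
decomposition. -/
def signedIntegral {α : Type*} [MeasurableSpace α] (μ : SignedMeasure α) (g : α → ℝ) : ℝ :=
  ∫ z, g z ∂μ.toJordanDecomposition.posPart - ∫ z, g z ∂μ.toJordanDecomposition.negPart

/-- The Borel σ-algebra on a product of two topological spaces. -/
instance (priority := 1100) prodBorelMeasurableSpace (K L : Type*)
    [TopologicalSpace K] [TopologicalSpace L] : MeasurableSpace (K × L) := borel _

instance (K L : Type*) [TopologicalSpace K] [TopologicalSpace L] : BorelSpace (K × L) := ⟨rfl⟩

open Set Filter

section signedIntegral

variable {α : Type*} [MeasurableSpace α]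

theorem signedIntegral_const_mul (μ : SignedMeasure α) (c : ℝ) (g : α → ℝ) :
    signedIntegral μ (fun z => c * g z) = c * signedIntegral μ g := by
  simp only [signedIntegral, integral_const_mul, mul_sub]

theorem signedIntegral_sub (μ : SignedMeasure α) {g₁ g₂ : α → ℝ}
    (h₁ : Integrable g₁ μ.totalVariation) (h₂ : Integrable g₂ μ.totalVariation) :
    signedIntegral μ (fun z => g₁ z - g₂ z) = signedIntegral μ g₁ - signedIntegral μ g₂ := by
  rw [SignedMeasure.totalVariation, integrable_add_measure] at h₁ h₂
  simp only [signedIntegral, integral_sub h₁.1 h₂.1, integral_sub h₁.2 h₂.2]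
  ring

theorem abs_signedIntegral_le (μ : SignedMeasure α) {g : α → ℝ} {C : ℝ}
    (hg : ∀ z, ‖g z‖ ≤ C) :
    |signedIntegral μ g| ≤ C * (μ.totalVariation univ).toReal := by
  set j := μ.toJordanDecomposition
  have hpos : ‖∫ z, g z ∂j.posPart‖ ≤ C * (j.posPart univ).toReal :=
    norm_integral_le_of_norm_le_const (ae_of_all _ hg)
  have hneg : ‖∫ z, g z ∂j.negPart‖ ≤ C * (j.negPart univ).toReal :=
    norm_integral_le_of_norm_le_const (ae_of_all _ hg)
  rw [Real.norm_eq_abs] at hpos hneg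
  rw [SignedMeasure.totalVariation, Measure.add_apply,
    ENNReal.toReal_add (measure_ne_top _ _) (measure_ne_top _ _), mul_add]
  exact (abs_sub _ _).trans (add_le_add hpos hneg)

end signedIntegral

section continuousMap

variable {L : Type*} [TopologicalSpace L] [CompactSpace L] [MeasurableSpace L]

theorem norm_signedIntegral_le_norm {μ : SignedMeasure L} (hμ : μ.totalVariation univ ≤ 1)
    (g : C(L, ℝ)) : ‖signedIntegral μ g‖ ≤ ‖g‖ :=
  (abs_signedIntegral_le μ g.norm_coe_le_norm).trans <| mul_le_of_le_one_right (norm_nonneg _) <|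
    ENNReal.toReal_le_of_le_ofReal zero_le_one (hμ.trans_eq ENNReal.ofReal_one.symm)

theorem ContinuousMap.integrable [OpensMeasurableSpace L] (g : C(L, ℝ)) (μ : Measure L)
    [IsFiniteMeasure μ] : Integrable g μ :=
  g.continuous.integrable_of_hasCompactSupport (HasCompactSupport.of_compactSpace _)

theorem lipschitzWith_signedIntegral [OpensMeasurableSpace L] (μ : SignedMeasure L) :
    LipschitzWith (μ.totalVariation univ).toNNReal fun g : C(L, ℝ) => signedIntegral μ g := by
  refine LipschitzWith.of_dist_le_mul fun g₁ g₂ => ?_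
  rw [Real.dist_eq, ← signedIntegral_sub μ (g₁.integrable _) (g₂.integrable _),
    ENNReal.coe_toNNReal_eq_toReal, mul_comm]
  exact abs_signedIntegral_le μ fun z => by
    simpa only [← dist_eq_norm] using ContinuousMap.dist_apply_le_dist (f := g₁) (g := g₂) z

end continuousMap

theorem MeasureTheory.SignedMeasure.ext_of_forall_signedIntegral_eq {L : Type*} [TopologicalSpace L]
    [HasOuterApproxClosed L] [MeasurableSpace L] [BorelSpace L] {μ μ' : SignedMeasure L}
    (h : ∀ g : BoundedContinuousFunction L ℝ, signedIntegral μ g = signedIntegral μ' g) :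
    μ = μ' := by
  have key : μ.toJordanDecomposition.posPart + μ'.toJordanDecomposition.negPart =
      μ'.toJordanDecomposition.posPart + μ.toJordanDecomposition.negPart := by
    refine ext_of_forall_integral_eq_of_IsFiniteMeasure fun g => ?_
    rw [integral_add_measure (g.integrable _) (g.integrable _),
      integral_add_measure (g.integrable _) (g.integrable _)]
    have hg := h g
    unfold signedIntegral at hg
    linarith
  rw [← μ.toSignedMeasure_toJordanDecomposition, ← μ'.toSignedMeasure_toJordanDecomposition,
    JordanDecomposition.toSignedMeasure, JordanDecomposition.toSignedMeasure,
    sub_eq_sub_iff_add_eq_add, ← Measure.toSignedMeasure_add, ← Measure.toSignedMeasure_add]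
  exact Measure.toSignedMeasure_congr key

theorem ae_eq_of_forall_ae_signedIntegral_eq {K L : Type*} [MeasurableSpace K]
    [TopologicalSpace L] [CompactSpace L] [TopologicalSpace.MetrizableSpace L]
    [MeasurableSpace L] [BorelSpace L] {σ : Measure K} {μ μ' : K → SignedMeasure L}
    (h : ∀ g : C(L, ℝ), ∀ᵐ t ∂σ, signedIntegral (μ t) g = signedIntegral (μ' t) g) :
    ∀ᵐ t ∂σ, μ t = μ' t := by
  obtain ⟨D, hD_countable, hD_dense⟩ := TopologicalSpace.exists_countable_dense C(L, ℝ)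
  filter_upwards [(ae_ball_iff hD_countable).mpr fun g _ => h g] with t ht
  have h_eq : (fun g : C(L, ℝ) => signedIntegral (μ t) g) =
      fun g : C(L, ℝ) => signedIntegral (μ' t) g :=
    Continuous.ext_on hD_dense (lipschitzWith_signedIntegral _).continuous
      (lipschitzWith_signedIntegral _).continuous ht
  exact SignedMeasure.ext_of_forall_signedIntegral_eq fun g => congrFun h_eq g.toContinuousMap

theorem ae_eq_zero_of_forall_integral_continuousMap_mul_eq_zero {K : Type*} [TopologicalSpace K]
    [CompactSpace K] [R1Space K] [MeasurableSpace K] [BorelSpace K] {σ : Measure K}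
    [IsFiniteMeasure σ] [σ.Regular] {h : K → ℝ} {C : ℝ} (hm : AEStronglyMeasurable h σ)
    (hb : ∀ᵐ t ∂σ, ‖h t‖ ≤ C) (hint : ∀ a : C(K, ℝ), ∫ t, a t * h t ∂σ = 0) :
    h =ᵐ[σ] 0 := by
  obtain ⟨C, hC, hb⟩ : ∃ C, 0 ≤ C ∧ ∀ᵐ t ∂σ, ‖h t‖ ≤ C :=
    ⟨max C 0, le_max_right _ _, hb.mono fun t ht => ht.trans (le_max_left _ _)⟩
  have h_int : Integrable h σ := .of_bound hm C hb
  have h_sq_int : Integrable (fun t => h t * h t) σ := h_int.bdd_mul hm hb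
  -- `∫ h² = ∫ h (h - a)` for continuous `a`, and `a` can be taken `L¹`-close to `h`.
  have h_sq_le : ∀ ε > 0, ∫ t, h t * h t ∂σ ≤ ε := by
    intro ε hε
    obtain ⟨a, -, ha_close, ha_cont, ha_int⟩ :=
      h_int.exists_hasCompactSupport_integral_sub_le (div_pos hε (by linarith : 0 < C + 1))
    calc ∫ t, h t * h t ∂σ = ∫ t, h t * (h t - a t) ∂σ := by
          have h_orth : ∫ t, h t * a t ∂σ = 0 := by
            simpa only [mul_comm, ContinuousMap.coe_mk] using hint ⟨a, ha_cont⟩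
          simp_rw [mul_sub]
          rw [integral_sub h_sq_int (ha_int.bdd_mul hm hb), h_orth, sub_zero]
      _ ≤ ∫ t, C * ‖h t - a t‖ ∂σ := by
          refine integral_mono_ae ((h_int.sub ha_int).bdd_mul hm hb)
            ((h_int.sub ha_int).norm.const_mul C) ?_
          filter_upwards [hb] with t ht
          calc h t * (h t - a t) ≤ ‖h t‖ * ‖h t - a t‖ :=
                (Real.le_norm_self _).trans_eq (norm_mul _ _)
            _ ≤ C * ‖h t - a t‖ := by gcongr
      _ = C * ∫ t, ‖h t - a t‖ ∂σ := integral_const_mul _ _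
      _ ≤ C * (ε / (C + 1)) := by gcongr
      _ ≤ ε := by
          rw [← mul_div_assoc, div_le_iff₀ (by linarith)]
          nlinarith
  have h_sq_zero : ∫ t, h t * h t ∂σ = 0 :=
    le_antisymm (le_of_forall_pos_le_add fun ε hε => by simpa using h_sq_le ε hε)
      (integral_nonneg fun t => mul_self_nonneg _)
  filter_upwards [(integral_eq_zero_iff_of_nonneg (fun t => mul_self_nonneg (h t)) h_sq_int).mp
    h_sq_zero] with t ht
  exact mul_self_eq_zero.mp ht

theorem ae_eq_of_forall_integral_continuousMap_mul_eq {K : Type*} [TopologicalSpace K]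
    [CompactSpace K] [R1Space K] [MeasurableSpace K] [BorelSpace K] {σ : Measure K}
    [IsFiniteMeasure σ] [σ.Regular] {h h' : K → ℝ} {C : ℝ} (hm : AEStronglyMeasurable h σ)
    (hm' : AEStronglyMeasurable h' σ) (hb : ∀ᵐ t ∂σ, ‖h t‖ ≤ C)
    (hb' : ∀ᵐ t ∂σ, ‖h' t‖ ≤ C)
    (hint : ∀ a : C(K, ℝ), ∫ t, a t * h t ∂σ = ∫ t, a t * h' t ∂σ) :
    h =ᵐ[σ] h' := by
  have integrable_mul (a : C(K, ℝ)) {f : K → ℝ} (hf : AEStronglyMeasurable f σ)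
      (hfb : ∀ᵐ t ∂σ, ‖f t‖ ≤ C) : Integrable (fun t => a t * f t) σ :=
    (Integrable.of_bound hf C hfb).bdd_mul a.continuous.aestronglyMeasurable
      (ae_of_all _ a.norm_coe_le_norm)
  have h_sub : h - h' =ᵐ[σ] 0 := by
    refine ae_eq_zero_of_forall_integral_continuousMap_mul_eq_zero (hm.sub hm') (C := C + C)
      ?_ fun a => ?_
    · filter_upwards [hb, hb'] with t ht ht'
      exact (norm_sub_le _ _).trans (add_le_add ht ht')
    · simp only [Pi.sub_apply, mul_sub]
      rw [integral_sub (integrable_mul a hm hb) (integrable_mul a hm' hb'), hint a, sub_self]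
  filter_upwards [h_sub] with t ht
  exact sub_eq_zero.mp ht

theorem MeasureTheory.Measure.regular_map_of_continuous {α β : Type*} [TopologicalSpace α]
    [MeasurableSpace α] [BorelSpace α] [TopologicalSpace β] [MeasurableSpace β] [BorelSpace β]
    [R1Space β] {μ : Measure α} [IsFiniteMeasure μ] [μ.Regular] {f : α → β} (hf : Continuous f) :
    (μ.map f).Regular :=
  have := Measure.InnerRegular.map_of_continuous (μ := μ) hf
  inferInstance

section Disintegration

variable {K L : Type*} [TopologicalSpace K] [MeasurableSpace K] [TopologicalSpace L]
  [MeasurableSpace L]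

def IsDisintegration (ν : SignedMeasure (K × L)) (σ : Measure K) (νt : K → SignedMeasure L) :
    Prop :=
  ∀ f : C(K × L, ℝ),
    NullMeasurable (fun t : K => signedIntegral (νt t) (fun z => f (t, z))) σ ∧
    signedIntegral ν (fun p => f p) = ∫ t, signedIntegral (νt t) (fun z => f (t, z)) ∂σ

variable {ν : SignedMeasure (K × L)} {σ : Measure K} {νt νt' : K → SignedMeasure L}

theorem IsDisintegration.aestronglyMeasurable_signedIntegral (hν : IsDisintegration ν σ νt)
    (g : C(L, ℝ)) : AEStronglyMeasurable (fun t => signedIntegral (νt t) g) σ :=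
  (hν (g.comp ⟨Prod.snd, continuous_snd⟩)).1.aemeasurable.aestronglyMeasurable

theorem IsDisintegration.integral_mul_signedIntegral (hν : IsDisintegration ν σ νt)
    (a : C(K, ℝ)) (g : C(L, ℝ)) :
    ∫ t, a t * signedIntegral (νt t) g ∂σ = signedIntegral ν (fun p => a p.1 * g p.2) := by
  have h := (hν (a.comp ⟨Prod.fst, continuous_fst⟩ * g.comp ⟨Prod.snd, continuous_snd⟩)).2
  simp only [ContinuousMap.mul_apply, ContinuousMap.comp_apply, ContinuousMap.coe_mk,
    signedIntegral_const_mul] at h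
  exact h.symm

theorem IsDisintegration.ae_signedIntegral_eq [CompactSpace K] [R1Space K] [BorelSpace K]
    [IsFiniteMeasure σ] [σ.Regular] [CompactSpace L] (hν : IsDisintegration ν σ νt)
    (hν' : IsDisintegration ν σ νt') (hb : ∀ t, (νt t).totalVariation univ ≤ 1)
    (hb' : ∀ t, (νt' t).totalVariation univ ≤ 1) (g : C(L, ℝ)) :
    ∀ᵐ t ∂σ, signedIntegral (νt t) g = signedIntegral (νt' t) g :=
  ae_eq_of_forall_integral_continuousMap_mul_eq (hν.aestronglyMeasurable_signedIntegral g)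
    (hν'.aestronglyMeasurable_signedIntegral g)
    (ae_of_all _ fun t => norm_signedIntegral_le_norm (hb t) g)
    (ae_of_all _ fun t => norm_signedIntegral_le_norm (hb' t) g)
    fun a => by rw [hν.integral_mul_signedIntegral, hν'.integral_mul_signedIntegral]

end Disintegration

theorem disintegration_kernel_ae_unique_general
    (K L : Type*) [TopologicalSpace K] [CompactSpace K] [T2Space K]
    [TopologicalSpace L] [CompactSpace L] [TopologicalSpace.MetrizableSpace L]
    [MeasurableSpace K] [BorelSpace K] [MeasurableSpace L] [BorelSpace L]
    (ν : SignedMeasure (K × L)) [ν.totalVariation.Regular]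
    (σ : Measure K) (hσ : σ = ν.totalVariation.map Prod.fst)
    (νt νt' : K → SignedMeasure L)
    (hnorm : ∀ t : K, (νt t).totalVariation Set.univ = 1)
    (hnorm' : ∀ t : K, (νt' t).totalVariation Set.univ = 1)
    (hdis : ∀ f : C(K × L, ℝ),
      NullMeasurable (fun t : K => signedIntegral (νt t) (fun z => f (t, z))) σ ∧
      signedIntegral ν (fun p => f p) = ∫ t, signedIntegral (νt t) (fun z => f (t, z)) ∂σ)
    (hdis' : ∀ f : C(K × L, ℝ),
      NullMeasurable (fun t : K => signedIntegral (νt' t) (fun z => f (t, z))) σ ∧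
      signedIntegral ν (fun p => f p) = ∫ t, signedIntegral (νt' t) (fun z => f (t, z)) ∂σ) :
    ∀ᵐ t ∂σ, νt t = νt' t := by
  subst hσ
  have : (ν.totalVariation.map Prod.fst).Regular :=
    Measure.regular_map_of_continuous continuous_fst
  refine ae_eq_of_forall_ae_signedIntegral_eq fun g => ?_
  exact IsDisintegration.ae_signedIntegral_eq hdis hdis' (fun t => (hnorm t).le)
    (fun t => (hnorm' t).le) g

/-- Essential uniqueness of disintegration kernels when `L` is metrizable: if
two families `(ν_t)` and `(ν'_t)` of norm-one signed Radon measures on `L` both disintegrate the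
finite signed Radon measure `ν` over the projection `σ` of `|ν|` to `K`, then `ν_t = ν'_t` for
`σ`-almost every `t ∈ K`. -/
theorem disintegration_kernel_ae_unique
    (K L : Type*) [TopologicalSpace K] [CompactSpace K] [T2Space K]
    [TopologicalSpace L] [CompactSpace L] [T2Space L] [TopologicalSpace.MetrizableSpace L]
    [MeasurableSpace K] [BorelSpace K] [MeasurableSpace L] [BorelSpace L]
    (ν : SignedMeasure (K × L)) [ν.totalVariation.Regular]
    (σ : Measure K) (hσ : σ = ν.totalVariation.map Prod.fst)
    (νt νt' : K → SignedMeasure L)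
    (hreg : ∀ t : K, (νt t).totalVariation.Regular)
    (hreg' : ∀ t : K, (νt' t).totalVariation.Regular)
    (hnorm : ∀ t : K, (νt t).totalVariation Set.univ = 1)
    (hnorm' : ∀ t : K, (νt' t).totalVariation Set.univ = 1)
    (hdis : ∀ f : C(K × L, ℝ),
      NullMeasurable (fun t : K => signedIntegral (νt t) (fun z => f (t, z))) σ ∧
      signedIntegral ν (fun p => f p) = ∫ t, signedIntegral (νt t) (fun z => f (t, z)) ∂σ)
    (hdis' : ∀ f : C(K × L, ℝ),
      NullMeasurable (fun t : K => signedIntegral (νt' t) (fun z => f (t, z))) σ ∧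
      signedIntegral ν (fun p => f p) = ∫ t, signedIntegral (νt' t) (fun z => f (t, z)) ∂σ) :
    ∀ᵐ t ∂σ, νt t = νt' t :=
  disintegration_kernel_ae_unique_general K L ν σ hσ νt νt' hnorm hnorm' hdis hdis'
end
end
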